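/- The quantum theta functions satisfy the commutation relation s ϑ̂_4 ϑ̂_1 − s^{-1} ϑ̂_1 ϑ̂_4 = (s − s^{-1}) t^{2H-E_1-E_2-E_3-E_4} · 1 in A (here s = q^{1/2}). -/

import Mathlib

/-!
The twisted commutator `[X, Y]ₛ = s X Y - s⁻¹ Y X` is `R`-bilinear, and on monomials of the
quantum torus it is `[ẑ^v, ẑ^w]ₛ = (s^{1 + det(v,w)} - s^{-1 - det(v,w)}) ẑ^{v+w}`, which vanishes
exactly when `det(v,w) = -1`. Expanding `[ϑ̂₄, ϑ̂₁]ₛ` into its nine monomial pairs, six have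
determinant `-1`, the pairs `((0,-1),(0,-1))` and `((1,0),(-1,-2))` contribute opposite multiples
of `t^{H+E₁-E₄-E₅} ẑ^{(0,-2)}`, and the pair `((1,1),(-1,-1))` gives `(s - s⁻¹) t^{2H-E₁-E₂-E₃-E₄}`.
-/

noncomputable section

/-- `R = ℂ[s^{±1}, t_H^{±1}, t₁^{±1}, …, t₅^{±1}]`, the Laurent polynomial ring in
seven variables over `ℂ` (index 0 is `s = q^{1/2}`, index 1 is `t_H`, indices 2–6 are
`t₁, …, t₅`), realized as the monoid algebra of `ℤ⁷`. -/
abbrev Rq : Type := AddMonoidAlgebra ℂ (Fin 7 → ℤ)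

/-- The power `s^k ∈ R` of the quantum parameter `s = q^{1/2}`. -/
def sQ (k : ℤ) : Rq := AddMonoidAlgebra.single ![k, 0, 0, 0, 0, 0, 0] 1

/-- The monomial `t^{aH + b₁E₁ + ⋯ + b₅E₅} = t_H^a t₁^{b₁} ⋯ t₅^{b₅} ∈ R`. -/
def tq (a b1 b2 b3 b4 b5 : ℤ) : Rq := AddMonoidAlgebra.single ![0, a, b1, b2, b3, b4, b5] 1

/-- `det((v₁,v₂),(w₁,w₂)) = v₁w₂ - v₂w₁`. -/
def detq (v w : ℤ × ℤ) : ℤ := v.1 * w.2 - v.2 * w.1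

variable {A : Type} [Ring A] [Algebra Rq A]

/-- The quantum torus relations: `ẑ^{(0,0)} = 1` and
`ẑ^v ẑ^w = s^{det(v,w)} ẑ^{v+w}` for all `v, w ∈ ℤ²`. -/
def IsQuantumTorus (zhat : ℤ × ℤ → A) : Prop :=
  zhat 0 = 1 ∧ ∀ v w : ℤ × ℤ, zhat v * zhat w = sQ (detq v w) • zhat (v + w)

/-- `ϑ̂₁ = ẑ^{(-1,-1)} + t^{E₁-E₅} ẑ^{(-1,-2)} + t^{H-E₄-E₅} ẑ^{(0,-1)}`. -/
def θq₁ (zhat : ℤ × ℤ → A) : A :=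
  zhat (-1, -1) + tq 0 1 0 0 0 (-1) • zhat (-1, -2) + tq 1 0 0 0 (-1) (-1) • zhat (0, -1)

/-- `ϑ̂₂ = ẑ^{(-1,0)} + t^{H-E₁-E₃} ẑ^{(0,1)} + t^{E₁-E₅} ẑ^{(-1,-1)}`. -/
def θq₂ (zhat : ℤ × ℤ → A) : A :=
  zhat (-1, 0) + tq 1 (-1) 0 (-1) 0 0 • zhat (0, 1) + tq 0 1 0 0 0 (-1) • zhat (-1, -1)

/-- `ϑ̂₃ = t^{H-E₁} ẑ^{(1,1)} + t^{2H-2E₁-E₂-E₃} ẑ^{(1,2)} + t^{H-E₁-E₂} ẑ^{(0,1)}`. -/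
def θq₃ (zhat : ℤ × ℤ → A) : A :=
  tq 1 (-1) 0 0 0 0 • zhat (1, 1) + tq 2 (-2) (-1) (-1) 0 0 • zhat (1, 2)
    + tq 1 (-1) (-1) 0 0 0 • zhat (0, 1)

/-- `ϑ̂₄ = t^{E₁} ẑ^{(0,-1)} + t^{H-E₄} ẑ^{(1,0)} + t^{2H-E₁-E₂-E₃-E₄} ẑ^{(1,1)}`. -/
def θq₄ (zhat : ℤ × ℤ → A) : A :=
  tq 0 1 0 0 0 0 • zhat (0, -1) + tq 1 0 0 0 (-1) 0 • zhat (1, 0)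
    + tq 2 (-1) (-1) (-1) (-1) 0 • zhat (1, 1)

/-- `C₁ = t^{H-E₁} + t^{2H-E₁-E₂-E₃-E₅} + t^{2H-E₁-E₂-E₄-E₅} ∈ R`. -/
def Cq₁ : Rq :=
  tq 1 (-1) 0 0 0 0 + tq 2 (-1) (-1) (-1) 0 (-1) + tq 2 (-1) (-1) 0 (-1) (-1)

/-- `C₂ = t^{H-E₄} + t^{H-E₃} + t^{2H-E₂-E₃-E₄-E₅} ∈ R`. -/
def Cq₂ : Rq :=
  tq 1 0 0 0 (-1) 0 + tq 1 0 0 (-1) 0 0 + tq 2 0 (-1) (-1) (-1) (-1)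


lemma single_mul_single' (u v : Fin 7 → ℤ) :
    (AddMonoidAlgebra.single u (1:ℂ)) * AddMonoidAlgebra.single v 1
      = AddMonoidAlgebra.single (u + v) 1 := by
  simp [AddMonoidAlgebra.single_mul_single]

theorem sQ_mul_sQ (m n : ℤ) : sQ m * sQ n = sQ (m + n) := by
  simp only [sQ, AddMonoidAlgebra.single_mul_single, mul_one, Matrix.cons_add_cons,
    Matrix.empty_add_empty, add_zero]

theorem tq_mul_tq (a b1 b2 b3 b4 b5 a' b1' b2' b3' b4' b5' : ℤ) :
    tq a b1 b2 b3 b4 b5 * tq a' b1' b2' b3' b4' b5'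
      = tq (a + a') (b1 + b1') (b2 + b2') (b3 + b3') (b4 + b4') (b5 + b5') := by
  simp only [tq, AddMonoidAlgebra.single_mul_single, mul_one, Matrix.cons_add_cons,
    Matrix.empty_add_empty, add_zero]

theorem detq_swap (v w : ℤ × ℤ) : detq w v = -detq v w := by
  unfold detq; ring

section sCommutator

variable {A : Type} [Ring A] [Algebra Rq A]

def sCommutator : A →ₗ[Rq] A →ₗ[Rq] A :=
  sQ 1 • LinearMap.mul Rq A - sQ (-1) • (LinearMap.mul Rq A).flip

theorem sCommutator_apply (x y : A) :
    sCommutator x y = sQ 1 • (x * y) - sQ (-1) • (y * x) := rfl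

theorem IsQuantumTorus.sCommutator_eq {zhat : ℤ × ℤ → A} (hz : IsQuantumTorus zhat)
    (v w : ℤ × ℤ) :
    sCommutator (zhat v) (zhat w)
      = (sQ (1 + detq v w) - sQ (-1 - detq v w)) • zhat (v + w) := by
  rw [sCommutator_apply, hz.2, hz.2, detq_swap v w, add_comm w, smul_smul, smul_smul,
    sQ_mul_sQ, sQ_mul_sQ, sub_smul, sub_eq_add_neg (-1)]

end sCommutator

theorem quantum_commutation_four_one {A : Type} [Ring A] [Algebra Rq A] (zhat : ℤ × ℤ → A)
    (hz : IsQuantumTorus zhat) :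
    sQ 1 • (θq₄ zhat * θq₁ zhat) - sQ (-1) • (θq₁ zhat * θq₄ zhat)
      = algebraMap Rq A ((sQ 1 - sQ (-1)) * tq 2 (-1) (-1) (-1) (-1) 0) := by
  rw [← sCommutator_apply, Algebra.algebraMap_eq_smul_one]
  simp only [θq₄, θq₁, map_add, map_smul, LinearMap.add_apply, LinearMap.smul_apply,
    hz.sCommutator_eq]
  norm_num [detq, Prod.mk_zero_zero, hz.1]
  have hmono : tq 0 1 0 0 0 (-1) * tq 1 0 0 0 (-1) 0 = tq 1 0 0 0 (-1) (-1) * tq 0 1 0 0 0 0 := by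
    simp only [tq_mul_tq]; norm_num
  linear_combination (norm := module) hmono • ((sQ (-1) - sQ 1) • zhat (0, -2))

end
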